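/- arXiv:math/0602312 — 3 statements merged into one kernel-verified Lean document; each statement's English description precedes it below -/
import Mathlib

section
/- Let A have property T, and suppose every finite-dimensional irreducible representation π of A has its central cover c(π) realized as a central projection p_π ∈ A with π(p_π) = 1 and p_π A ≅ M_n(ℂ). Let J ⊴ A be the closed two-sided ideal generated by all such Kazhdan projections. Then the quotient A/J has no nonzero finite-dimensional representation. -/
/-!
A nonzero finite-dimensional representation `ρ` of `A` has a nonzero invariant subspace of
minimal dimension, and compressing `ρ` to it by an isometry `V` gives an irreducible
representation `π a = V* ρ(a) V`. The Kazhdan projection `p` of `π` lies in `J`, so `ρ(p) = 0`,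
hence `π(p) = 0`, contradicting `π(p) = 1`.
-/

open Filter MulOpposite ContinuousLinearMap

/-- Bekka's property T for a unital C*-algebra. -/
def PropertyT (A : Type*) [Ring A] [StarRing A] [Algebra ℂ A] : Prop :=
  ∀ (H : Type) [NormedAddCommGroup H] [InnerProductSpace ℂ H] [CompleteSpace H]
    (L : A →⋆ₐ[ℂ] (H →L[ℂ] H)) (R : Aᵐᵒᵖ →⋆ₐ[ℂ] (H →L[ℂ] H)),
    (∀ (a : A) (b : Aᵐᵒᵖ), Commute (L a) (R b)) →
    (∃ ξ : ℕ → H, (∀ n, ‖ξ n‖ = 1) ∧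
      ∀ a : A, Tendsto (fun n => ‖L a (ξ n) - R (op a) (ξ n)‖) atTop (nhds 0)) →
    ∃ ξ : H, ξ ≠ 0 ∧ ∀ a : A, L a ξ = R (op a) ξ

/-- `p` is a Kazhdan projection of `A`: a central projection such that `π(p) = 1` for some
finite-dimensional irreducible representation `π : A → M_n(ℂ)`, and `π` restricts to an
isomorphism of `pA` onto `M_n(ℂ)`. -/
def IsKazhdanProjection {A : Type*} [NormedRing A] [StarRing A] [NormedAlgebra ℂ A]
    (p : A) : Prop :=
  (∀ a : A, p * a = a * p) ∧ p * p = p ∧ star p = p ∧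
    ∃ (n : ℕ) (_ : 0 < n)
      (π : A →⋆ₐ[ℂ] (EuclideanSpace ℂ (Fin n) →L[ℂ] EuclideanSpace ℂ (Fin n))),
      (∀ S : Submodule ℂ (EuclideanSpace ℂ (Fin n)),
        (∀ (a : A) (x : EuclideanSpace ℂ (Fin n)), x ∈ S → π a x ∈ S) → S = ⊥ ∨ S = ⊤) ∧
      π p = 1 ∧
      Function.Bijective (fun x : A => π (p * x))

section Compression

variable {A H K : Type*} [Semiring A] [Algebra ℂ A] [Star A]
  [NormedAddCommGroup H] [InnerProductSpace ℂ H] [CompleteSpace H]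
  [NormedAddCommGroup K] [InnerProductSpace ℂ K] [CompleteSpace K]

def IsInvariantSubmodule (ρ : A →⋆ₐ[ℂ] (H →L[ℂ] H)) (S : Submodule ℂ H) : Prop :=
  ∀ (a : A) (x : H), x ∈ S → ρ a x ∈ S

variable (ρ : A →⋆ₐ[ℂ] (H →L[ℂ] H)) {V : K →L[ℂ] H}

lemma leftInverse_adjoint_of_adjoint_comp_self (hV : adjoint V ∘L V = 1) :
    Function.LeftInverse (adjoint V) V :=
  fun x => congr($hV x)

lemma apply_adjoint_apply_of_mem_range (hV : adjoint V ∘L V = 1) {y : H}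
    (hy : y ∈ LinearMap.range V.toLinearMap) : V (adjoint V y) = y := by
  obtain ⟨x, rfl⟩ := hy
  exact congrArg V (leftInverse_adjoint_of_adjoint_comp_self hV x)

noncomputable def compression (hV : adjoint V ∘L V = 1)
    (hinv : IsInvariantSubmodule ρ (LinearMap.range V.toLinearMap)) : A →⋆ₐ[ℂ] (K →L[ℂ] K) where
  toFun a := adjoint V ∘L ρ a ∘L V
  map_one' := by rw [map_one, one_def, id_comp, hV]
  map_mul' a b := by
    ext x
    simp only [map_mul, mul_apply_eq_comp, coe_comp, Function.comp_apply,
      apply_adjoint_apply_of_mem_range hV (hinv b (V x) ⟨x, rfl⟩)]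
  map_zero' := by rw [map_zero, zero_comp, comp_zero]
  map_add' a b := by rw [map_add, add_comp, comp_add]
  commutes' c := by
    rw [AlgHomClass.commutes, Algebra.algebraMap_eq_smul_one, Algebra.algebraMap_eq_smul_one,
      smul_comp, comp_smul, one_def, id_comp, hV]
  map_star' a := by
    rw [star_eq_adjoint, adjoint_comp, adjoint_comp, adjoint_adjoint, ← star_eq_adjoint,
      ← map_star, comp_assoc]

lemma compression_apply (hV : adjoint V ∘L V = 1)
    (hinv : IsInvariantSubmodule ρ (LinearMap.range V.toLinearMap)) (a : A) :
    compression ρ hV hinv a = adjoint V ∘L ρ a ∘L V :=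
  rfl

lemma compression_irreducible (hV : adjoint V ∘L V = 1)
    (hinv : IsInvariantSubmodule ρ (LinearMap.range V.toLinearMap))
    (hmin : ∀ T, IsInvariantSubmodule ρ T → T ≠ ⊥ → T ≤ LinearMap.range V.toLinearMap →
      T = LinearMap.range V.toLinearMap) (T : Submodule ℂ K)
    (hT : IsInvariantSubmodule (compression ρ hV hinv) T) : T = ⊥ ∨ T = ⊤ := by
  have hVinj := (leftInverse_adjoint_of_adjoint_comp_self hV).injective
  refine or_iff_not_imp_left.2 fun hTne => ?_
  have hmap_inv : IsInvariantSubmodule ρ (T.map V.toLinearMap) := by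
    rintro a _ ⟨x, hx, rfl⟩
    exact ⟨_, hT a x hx, apply_adjoint_apply_of_mem_range hV (hinv a _ ⟨x, rfl⟩)⟩
  have hmap_ne : T.map V.toLinearMap ≠ ⊥ := by
    simpa using (Submodule.map_injective_of_injective hVinj).ne hTne
  have hmap_eq := hmin _ hmap_inv hmap_ne LinearMap.map_le_range
  rw [LinearMap.range_eq_map] at hmap_eq
  exact Submodule.map_injective_of_injective hVinj hmap_eq

end Compression

section FiniteDimensional

variable {A H : Type*} [Semiring A] [Algebra ℂ A] [Star A]
  [NormedAddCommGroup H] [InnerProductSpace ℂ H] [FiniteDimensional ℂ H] [Nontrivial H]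
  (ρ : A →⋆ₐ[ℂ] (H →L[ℂ] H))

lemma exists_minimal_invariant_submodule :
    ∃ S : Submodule ℂ H, IsInvariantSubmodule ρ S ∧ S ≠ ⊥ ∧
      ∀ T, IsInvariantSubmodule ρ T → T ≠ ⊥ → T ≤ S → T = S := by
  obtain ⟨S, ⟨hSinv, hSne⟩, hmin⟩ := wellFounded_lt.has_min
    {S : Submodule ℂ H | IsInvariantSubmodule ρ S ∧ S ≠ ⊥} ⟨⊤, fun _ _ _ => trivial, top_ne_bot⟩
  exact ⟨S, hSinv, hSne, fun T hT hTne hle => hle.eq_of_not_lt (hmin T ⟨hT, hTne⟩)⟩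

lemma exists_irreducible_compression :
    ∃ (k : ℕ) (π : A →⋆ₐ[ℂ] (EuclideanSpace ℂ (Fin k) →L[ℂ] EuclideanSpace ℂ (Fin k)))
      (V : EuclideanSpace ℂ (Fin k) →L[ℂ] H), 0 < k ∧
      (∀ T, IsInvariantSubmodule π T → T = ⊥ ∨ T = ⊤) ∧ ∀ a, π a = adjoint V ∘L ρ a ∘L V := by
  obtain ⟨S, hSinv, hSne, hmin⟩ := exists_minimal_invariant_submodule ρ
  have : Nontrivial S := Submodule.nontrivial_iff_ne_bot.mpr hSne
  let e := (stdOrthonormalBasis ℂ S).repr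
  let V := (S.subtypeₗᵢ.comp e.symm.toLinearIsometry).toContinuousLinearMap
  have hV : adjoint V ∘L V = 1 := LinearIsometry.adjoint_comp_self _
  have hrange : LinearMap.range V.toLinearMap = S := by
    ext y
    refine ⟨?_, fun hy => ⟨e ⟨y, hy⟩, by simp [V]⟩⟩
    rintro ⟨x, rfl⟩
    exact (e.symm x).2
  rw [← hrange] at hSinv hmin
  exact ⟨_, compression ρ hV hSinv, V, Module.finrank_pos,
    compression_irreducible ρ hV hSinv hmin, compression_apply ρ hV hSinv⟩

end FiniteDimensional

theorem quotient_by_kazhdan_ideal_no_finite_dimensional_representation_general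
    {A : Type*} [NormedRing A] [StarRing A] [NormedAlgebra ℂ A]
    (hkazhdan : ∀ (n : ℕ), 0 < n →
      ∀ π : A →⋆ₐ[ℂ] (EuclideanSpace ℂ (Fin n) →L[ℂ] EuclideanSpace ℂ (Fin n)),
        (∀ S : Submodule ℂ (EuclideanSpace ℂ (Fin n)),
          (∀ (a : A) (x : EuclideanSpace ℂ (Fin n)), x ∈ S → π a x ∈ S) → S = ⊥ ∨ S = ⊤) →
        ∃ p : A, IsKazhdanProjection p ∧ π p = 1)
    (m : ℕ)
    (ρ : A →⋆ₐ[ℂ] (EuclideanSpace ℂ (Fin m) →L[ℂ] EuclideanSpace ℂ (Fin m)))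
    (hvanish : ∀ x ∈ closure ((Ideal.span {p : A | IsKazhdanProjection p} : Ideal A) : Set A),
      ρ x = 0) :
    m = 0 := by
  by_contra hm
  have : NeZero m := ⟨hm⟩
  obtain ⟨k, π, V, hk, hirr, hπ⟩ := exists_irreducible_compression ρ
  obtain ⟨p, hp, hπp⟩ := hkazhdan k hk π hirr
  have hρp : ρ p = 0 := hvanish p (subset_closure (Ideal.subset_span hp))
  have : NeZero k := ⟨hk.ne'⟩
  exact one_ne_zero (hπp.symm.trans (by rw [hπ, hρp, zero_comp, comp_zero]))

/-- Assume `A` has property T and every finite-dimensional irreducible representation of `A`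
has its Kazhdan projection realized in `A`. Let `J ⊴ A` be the closed (two-sided) ideal
generated by all the Kazhdan projections. Then the quotient `A/J` has no nonzero
finite-dimensional representation; equivalently (as stated here) every finite-dimensional
representation of `A` vanishing on `J` acts on the zero space. -/
theorem quotient_by_kazhdan_ideal_no_finite_dimensional_representation
    {A : Type*} [NormedRing A] [StarRing A] [CStarRing A] [NormedAlgebra ℂ A]
    [CompleteSpace A] [TopologicalSpace.SeparableSpace A]
    (hT : PropertyT A)
    (hkazhdan : ∀ (n : ℕ), 0 < n →
      ∀ π : A →⋆ₐ[ℂ] (EuclideanSpace ℂ (Fin n) →L[ℂ] EuclideanSpace ℂ (Fin n)),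
        (∀ S : Submodule ℂ (EuclideanSpace ℂ (Fin n)),
          (∀ (a : A) (x : EuclideanSpace ℂ (Fin n)), x ∈ S → π a x ∈ S) → S = ⊥ ∨ S = ⊤) →
        ∃ p : A, IsKazhdanProjection p ∧ π p = 1)
    (m : ℕ)
    (ρ : A →⋆ₐ[ℂ] (EuclideanSpace ℂ (Fin m) →L[ℂ] EuclideanSpace ℂ (Fin m)))
    (hvanish : ∀ x ∈ closure ((Ideal.span {p : A | IsKazhdanProjection p} : Ideal A) : Set A),
      ρ x = 0) :
    m = 0 :=
  quotient_by_kazhdan_ideal_no_finite_dimensional_representation_general hkazhdan m ρ hvanish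
end

section
/- If T is a nonzero compact operator in the commutant of a representation ρ(A) ⊆ B(H), then the commutant ρ(A)′ contains a nonzero finite-rank projection, and consequently A has a nonzero finite-dimensional representation (compression of ρ to the range of that projection). -/
/-!
Replacing `T` by `T⋆T` we may assume `T` compact, self-adjoint and nonzero; since `ρ(A)` is closed
under adjoints, `T⋆T` still commutes with `ρ(A)`. The spectral theorem for compact self-adjoint
operators gives an eigenvalue `μ ≠ 0`, whose eigenspace `K` is finite-dimensional and invariant
under `ρ(A)`. As `ρ(A)` is self-adjoint, `K` reduces `ρ`: the orthogonal projection onto `K`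
commutes with `ρ(A)`, and restricting `ρ` to `K` is a `⋆`-representation on `K ≅ ℂᵐ`.
-/

open ContinuousLinearMap

section

open Module.End

theorem commute_star_mul_self_of_forall_commute {R A B : Type*} [CommSemiring R]
    [Semiring A] [Algebra R A] [Star A] [Semiring B] [Algebra R B] [StarRing B]
    (ρ : A →⋆ₐ[R] B) {t : B} (ht : ∀ a, Commute t (ρ a)) (a : A) :
    Commute (star t * t) (ρ a) := by
  have h := (ht (star a)).star_star
  rw [map_star, star_star] at h
  exact h.mul_left (ht a)

variable {𝕜 E : Type*} [RCLike 𝕜] [NormedAddCommGroup E] [InnerProductSpace 𝕜 E]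

theorem ContinuousLinearMap.eigenspace_mem_invtSubmodule_of_commute {S B : E →L[𝕜] E}
    (h : Commute S B) (μ : 𝕜) :
    eigenspace (S : E →ₗ[𝕜] E) μ ∈ invtSubmodule (B : E →ₗ[𝕜] E) :=
  mapsTo_genEigenspace_of_comm (h.map toLinearMapRingHom) μ 1

variable [CompleteSpace E]

namespace ContinuousLinearMap

theorem exists_hasEigenvalue_ne_zero {T : E →L[𝕜] E} (hT : IsCompactOperator T)
    (hT' : IsSelfAdjoint T) (hT0 : T ≠ 0) :
    ∃ μ, HasEigenvalue (T : E →ₗ[𝕜] E) μ ∧ μ ≠ 0 := by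
  by_contra! h
  exact hT0 ((eq_zero_of_forall_hasEigenvalue_eq_zero hT hT'.isSymmetric).mp h)

theorem commute_starProjection_of_mem_invtSubmodule {B : E →L[𝕜] E} {K : Submodule 𝕜 E}
    [K.HasOrthogonalProjection] (hB : K ∈ invtSubmodule (B : E →ₗ[𝕜] E))
    (hB' : K ∈ invtSubmodule (adjoint B : E →ₗ[𝕜] E)) :
    Commute K.starProjection B := by
  have h := LinearMap.IsIdempotentElem.commute_iff (T := (B : E →ₗ[𝕜] E))
    K.isIdempotentElem_starProjection.toLinearMap
  rw [show LinearMap.range (K.starProjection : E →ₗ[𝕜] E) = K from K.range_starProjection,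
    show LinearMap.ker (K.starProjection : E →ₗ[𝕜] E) = Kᗮ from K.ker_starProjection] at h
  have h' := h.mpr ⟨hB, orthogonal_mem_invtSubmodule hB'⟩
  exact coe_injective (by simpa only [Commute, SemiconjBy, toLinearMap_mul] using h')

end ContinuousLinearMap

namespace StarAlgHom

variable {A : Type*} [Semiring A] [Algebra 𝕜 A] [Star A]

noncomputable def compression (ρ : A →⋆ₐ[𝕜] (E →L[𝕜] E)) (K : Submodule 𝕜 E) [CompleteSpace K]
    (hK : ∀ a, K ∈ invtSubmodule (ρ a : E →ₗ[𝕜] E)) : A →⋆ₐ[𝕜] (K →L[𝕜] K) where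
  toFun a := (ρ a).restrict ((mem_invtSubmodule_iff_forall_mem_of_mem _).mp (hK a))
  map_one' := by ext; simp
  map_mul' a b := by ext; simp
  map_zero' := by ext; simp
  map_add' a b := by ext; simp
  commutes' c := by ext; simp [Algebra.algebraMap_eq_smul_one]
  map_star' a := by
    refine (eq_adjoint_iff _ _).mpr fun x y ↦ ?_
    simp only [Submodule.coe_inner, coe_restrict_apply, map_star, star_eq_adjoint,
      adjoint_inner_left]

theorem commute_starProjection (ρ : A →⋆ₐ[𝕜] (E →L[𝕜] E)) {K : Submodule 𝕜 E}
    [K.HasOrthogonalProjection] (hK : ∀ a, K ∈ invtSubmodule (ρ a : E →ₗ[𝕜] E)) (a : A) :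
    Commute K.starProjection (ρ a) :=
  commute_starProjection_of_mem_invtSubmodule (hK a) (by
    rw [← star_eq_adjoint, ← map_star]
    exact hK (star a))

theorem exists_finiteDimensional_invariant_of_commute_isCompactOperator
    (ρ : A →⋆ₐ[𝕜] (E →L[𝕜] E)) {T : E →L[𝕜] E} (hT : IsCompactOperator T) (hT0 : T ≠ 0)
    (hcomm : ∀ a, Commute T (ρ a)) :
    ∃ K : Submodule 𝕜 E, K ≠ ⊥ ∧ FiniteDimensional 𝕜 K ∧
      ∀ a, K ∈ invtSubmodule (ρ a : E →ₗ[𝕜] E) := by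
  have hS : IsCompactOperator (star T * T) := hT.clm_comp (adjoint T)
  have hS0 : star T * T ≠ 0 := (CStarRing.star_mul_self_eq_zero_iff T).not.mpr hT0
  obtain ⟨μ, hμ, hμ0⟩ := exists_hasEigenvalue_ne_zero hS (.star_mul_self T) hS0
  exact ⟨_, hasEigenvalue_iff.mp hμ, finite_dimensional_eigenspace hS μ hμ0, fun a ↦
    eigenspace_mem_invtSubmodule_of_commute (commute_star_mul_self_of_forall_commute ρ hcomm a) μ⟩

end StarAlgHom

end

theorem compact_in_commutant_gives_finite_rank_projection_and_fd_rep_general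
    {A : Type*} [NormedRing A] [StarRing A] [NormedAlgebra ℂ A]
    {H : Type*} [NormedAddCommGroup H] [InnerProductSpace ℂ H] [CompleteSpace H]
    (ρ : A →⋆ₐ[ℂ] (H →L[ℂ] H))
    (T : H →L[ℂ] H) (hTc : IsCompactOperator T) (hT0 : T ≠ 0)
    (hcomm : ∀ a : A, T.comp (ρ a) = (ρ a).comp T) :
    (∃ p : H →L[ℂ] H, p ≠ 0 ∧ p.comp p = p ∧ adjoint p = p ∧
        FiniteDimensional ℂ (LinearMap.range (p : H →ₗ[ℂ] H)) ∧
        ∀ a : A, p.comp (ρ a) = (ρ a).comp p) ∧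
      ∃ (m : ℕ) (_ : 0 < m),
        Nonempty (A →⋆ₐ[ℂ] (EuclideanSpace ℂ (Fin m) →L[ℂ] EuclideanSpace ℂ (Fin m))) := by
  obtain ⟨K, hK0, hKfin, hKinv⟩ :=
    ρ.exists_finiteDimensional_invariant_of_commute_isCompactOperator hTc hT0 hcomm
  have hrange : LinearMap.range (K.starProjection : H →ₗ[ℂ] H) = K := K.range_starProjection
  have : Nontrivial K := Submodule.nontrivial_iff_ne_bot.mpr hK0
  refine ⟨⟨K.starProjection, fun h ↦ hK0 ?_, K.isIdempotentElem_starProjection,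
      isSelfAdjoint_starProjection K, by rwa [hrange], ρ.commute_starProjection hKinv⟩,
    Module.finrank ℂ K, Module.finrank_pos,
    ⟨(stdOrthonormalBasis ℂ K).repr.conjStarAlgEquiv.toStarAlgHom.comp (ρ.compression K hKinv)⟩⟩
  rw [← hrange, h]
  exact LinearMap.range_zero

/-- If `T` is a nonzero compact operator commuting with a representation `ρ(A) ⊆ B(H)`,
then the commutant `ρ(A)'` contains a nonzero finite-rank (orthogonal) projection, and
consequently `A` admits a nonzero finite-dimensional representation (the compression of
`ρ` to the range of that projection). -/
theorem compact_in_commutant_gives_finite_rank_projection_and_fd_rep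
    {A : Type*} [NormedRing A] [StarRing A] [CStarRing A] [NormedAlgebra ℂ A]
    [CompleteSpace A]
    {H : Type*} [NormedAddCommGroup H] [InnerProductSpace ℂ H] [CompleteSpace H]
    (ρ : A →⋆ₐ[ℂ] (H →L[ℂ] H))
    (T : H →L[ℂ] H) (hTc : IsCompactOperator T) (hT0 : T ≠ 0)
    (hcomm : ∀ a : A, T.comp (ρ a) = (ρ a).comp T) :
    (∃ p : H →L[ℂ] H, p ≠ 0 ∧ p.comp p = p ∧ adjoint p = p ∧
        FiniteDimensional ℂ (LinearMap.range (p : H →ₗ[ℂ] H)) ∧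
        ∀ a : A, p.comp (ρ a) = (ρ a).comp p) ∧
      ∃ (m : ℕ) (_ : 0 < m),
        Nonempty (A →⋆ₐ[ℂ] (EuclideanSpace ℂ (Fin m) →L[ℂ] EuclideanSpace ℂ (Fin m))) :=
  compact_in_commutant_gives_finite_rank_projection_and_fd_rep_general ρ T hTc hT0 hcomm
end

section
/- If B is a C*-algebra with property T and C is any unital C*-algebra with no tracial states, then B ⊕ C has property T. -/
open Filter MulOpposite
open scoped ComplexOrder

/-!
Write `p = (1, 0)` and `q = (0, 1)` and let `ξₙ` be almost central unit vectors of a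
`B × C`-bimodule `H`. The compressions `pξₙp` and `qξₙq` are almost central vectors of the
`B`-bimodule `pHp` and of the `C`-bimodule `qHq`, and the off-diagonal parts `pξₙq`, `qξₙp` tend
to `0` because `‖pξₙ - ξₙp‖ → 0`. If `‖qξₙq‖` did not tend to `0`, a normalised subsequence `ζₖ`
of `qξₙq` would be almost central in `qHq`, and an ultrafilter limit of `c ↦ ⟪ζₖ, c ζₖ⟫` would be
a tracial state on `C`. So `‖pξₙp‖ → 1`, property T of `B` gives a nonzero `B`-central vector in
`pHp`, and this vector is central for `B × C` because `C` acts on `pHp` by zero from both sides.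
-/

open scoped InnerProductSpace

namespace NonUnitalStarAlgHom

variable {R A B : Type*} [Monoid R] [NonUnitalNonAssocSemiring A] [DistribMulAction R A]
  [Star A] [NonUnitalNonAssocSemiring B] [DistribMulAction R B] [Star B]

def op (φ : A →⋆ₙₐ[R] B) : Aᵐᵒᵖ →⋆ₙₐ[R] Bᵐᵒᵖ where
  toFun a := MulOpposite.op (φ a.unop)
  map_smul' _ _ := by simp
  map_zero' := by simp
  map_add' _ _ := by simp
  map_mul' _ _ := by simp
  map_star' _ := by simp [map_star]

end NonUnitalStarAlgHom

theorem IsStarProjection.op {A : Type*} [Mul A] [Star A] {e : A} (he : IsStarProjection e) :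
    IsStarProjection (MulOpposite.op e) :=
  ⟨congrArg MulOpposite.op he.isIdempotentElem.eq, congrArg MulOpposite.op he.isSelfAdjoint.star_eq⟩

namespace ContinuousLinearMap

variable {𝕜 E : Type*} [RCLike 𝕜] [NormedAddCommGroup E] [InnerProductSpace 𝕜 E] [CompleteSpace E]
  {K : Submodule 𝕜 E} [CompleteSpace K]

theorem star_restrict (T : E →L[𝕜] E) (hT : ∀ x ∈ K, T x ∈ K) (hT' : ∀ x ∈ K, star T x ∈ K) :
    star (T.restrict hT) = (star T).restrict hT' := by
  refine (eq_adjoint_iff _ _).mpr (fun x y => ?_) |>.symm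
  simp [star_eq_adjoint, adjoint_inner_left]

end ContinuousLinearMap

namespace NonUnitalStarAlgHom

variable {B H : Type*} [Ring B] [StarRing B] [Algebra ℂ B]
  [NormedAddCommGroup H] [InnerProductSpace ℂ H] [CompleteSpace H]

noncomputable def restrictUnital (Φ : B →⋆ₙₐ[ℂ] (H →L[ℂ] H)) (K : Submodule ℂ H) [CompleteSpace K]
    (hK : ∀ b, ∀ x ∈ K, Φ b x ∈ K) (h1 : ∀ x ∈ K, Φ 1 x = x) :
    B →⋆ₐ[ℂ] (K →L[ℂ] K) where
  toFun b := (Φ b).restrict (hK b)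
  map_one' := by ext x; exact h1 x x.2
  map_mul' _ _ := by ext; simp [map_mul]
  map_zero' := by ext; simp
  map_add' _ _ := by ext; simp
  commutes' z := by ext x; simp [Algebra.algebraMap_eq_smul_one, h1 x x.2]
  map_star' b := by
    rw [ContinuousLinearMap.star_restrict _ _ (by simpa [map_star] using hK (star b))]
    ext; simp [map_star]

end NonUnitalStarAlgHom

section Projection

variable {𝕜 E : Type*} [RCLike 𝕜] [NormedAddCommGroup E] [InnerProductSpace 𝕜 E] [CompleteSpace E]
  {P Q : E →L[𝕜] E}

theorem IsStarProjection.norm_apply_le (hQ : IsStarProjection Q) (x : E) : ‖Q x‖ ≤ ‖x‖ := by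
  simpa using Q.le_of_opNorm_le (hQ.norm_le _) x

theorem norm_le_of_isStarProjection (hQ : IsStarProjection Q) (hPQ : Commute P Q) (x : E) :
    ‖x‖ ≤ ‖P (Q x)‖ + ‖(1 - P) ((1 - Q) x)‖ + 2 * ‖P x - Q x‖ := by
  have h₁ : P * (1 - Q) = (1 - Q) * (P - Q) := by
    rw [mul_sub (1 - Q), hQ.one_sub_mul_self, sub_zero, ((Commute.one_right P).sub_right hPQ).eq]
  have h₂ : (1 - P) * Q = Q * (Q - P) := by
    rw [mul_sub, hQ.isIdempotentElem.eq, ← hPQ.eq, sub_mul, one_mul]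
  have hdecomp : x = P (Q x) + P ((1 - Q) x) + (1 - P) (Q x) + (1 - P) ((1 - Q) x) := by
    simp only [sub_apply, one_apply_eq_self, map_sub]
    abel
  have hPQ' : ‖P ((1 - Q) x)‖ ≤ ‖P x - Q x‖ := by
    rw [← mul_apply_eq_comp, h₁, mul_apply_eq_comp]
    exact hQ.one_sub.norm_apply_le _
  have hQP : ‖(1 - P) (Q x)‖ ≤ ‖P x - Q x‖ := by
    rw [← mul_apply_eq_comp, h₂, mul_apply_eq_comp, norm_sub_rev (P x)]
    exact hQ.norm_apply_le _
  calc ‖x‖ ≤ ‖P (Q x)‖ + ‖P ((1 - Q) x)‖ + ‖(1 - P) (Q x)‖ + ‖(1 - P) ((1 - Q) x)‖ := by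
        conv_lhs => rw [hdecomp]
        exact norm_add₄_le
    _ ≤ _ := by linarith

end Projection

theorem Ultrafilter.exists_linearMap_tendsto {𝕜 M ι : Type*} [NormedField 𝕜] [ProperSpace 𝕜]
    [AddCommGroup M] [Module 𝕜 M] (F : M →ₗ[𝕜] ι → 𝕜) (U : Ultrafilter ι)
    (hF : ∀ m, ∃ C, ∀ i, ‖F m i‖ ≤ C) :
    ∃ τ : M →ₗ[𝕜] 𝕜, ∀ m, Tendsto (F m) U (nhds (τ m)) := by
  have hlim (m : M) : Tendsto (F m) U (nhds (limUnder U (F m))) := by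
    obtain ⟨C, hC⟩ := hF m
    obtain ⟨z, -, hz⟩ := (isCompact_closedBall (0 : 𝕜) C).ultrafilter_le_nhds' (U.map (F m))
      (Ultrafilter.mem_map.mpr (Filter.univ_mem' fun i => by simpa using hC i))
    exact tendsto_nhds_limUnder ⟨z, hz⟩
  refine ⟨{ toFun m := limUnder U (F m), map_add' := ?_, map_smul' := ?_ }, hlim⟩
  · intro m m'
    refine tendsto_nhds_unique (hlim _) ?_
    rw [map_add]
    exact (hlim m).add (hlim m')
  · intro c m
    refine tendsto_nhds_unique (hlim _) ?_
    rw [map_smul]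
    exact (hlim m).const_smul c


section AlmostCentral

variable {A H : Type*} [Ring A] [StarRing A] [Algebra ℂ A]
  [NormedAddCommGroup H] [InnerProductSpace ℂ H] [CompleteSpace H]

def IsAlmostCentral (L : A →⋆ₐ[ℂ] (H →L[ℂ] H)) (R : Aᵐᵒᵖ →⋆ₐ[ℂ] (H →L[ℂ] H)) {ι : Type*}
    (l : Filter ι) (ξ : ι → H) : Prop :=
  ∀ a : A, Tendsto (fun i => ‖L a (ξ i) - R (op a) (ξ i)‖) l (nhds 0)

variable {L : A →⋆ₐ[ℂ] (H →L[ℂ] H)} {R : Aᵐᵒᵖ →⋆ₐ[ℂ] (H →L[ℂ] H)}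

theorem IsAlmostCentral.exists_unit_of_not_tendsto {ζ : ℕ → H} (hζ : IsAlmostCentral L R atTop ζ)
    (h0 : ¬Tendsto (fun n => ‖ζ n‖) atTop (nhds 0)) :
    ∃ ξ : ℕ → H, (∀ n, ‖ξ n‖ = 1) ∧ IsAlmostCentral L R atTop ξ := by
  obtain ⟨ε, hε, hfreq⟩ : ∃ ε > 0, ∃ᶠ n in atTop, ε ≤ ‖ζ n‖ := by
    simpa [Metric.tendsto_atTop, frequently_atTop] using h0
  obtain ⟨ψ, hψ, hψε⟩ := extraction_of_frequently_atTop hfreq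
  have hpos (k : ℕ) : 0 < ‖ζ (ψ k)‖ := hε.trans_le (hψε k)
  refine ⟨fun k => (‖ζ (ψ k)‖⁻¹ : ℂ) • ζ (ψ k),
    fun k => norm_smul_inv_norm (norm_pos_iff.mp (hpos k)), fun a => ?_⟩
  have hlim := ((hζ a).comp hψ.tendsto_atTop).const_mul ε⁻¹
  rw [mul_zero] at hlim
  refine squeeze_zero (fun _ => norm_nonneg _) (fun k => ?_) hlim
  rw [map_smul, map_smul, ← smul_sub, norm_smul, norm_inv, Complex.norm_real, norm_norm]
  exact mul_le_mul_of_nonneg_right (inv_anti₀ hε (hψε k)) (norm_nonneg _)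

theorem inner_map_mul_sub_inner_map_mul (hcomm : ∀ (a : A) (b : Aᵐᵒᵖ), Commute (L a) (R b))
    (a b : A) (x : H) :
    ⟪x, L (a * b) x⟫_ℂ - ⟪x, L (b * a) x⟫_ℂ
      = ⟪L (star a) x, L b x - R (op b) x⟫_ℂ
        + ⟪L (star a) (R (op (star b)) x - L (star b) x), x⟫_ℂ := by
  have h₁ : ⟪x, L (a * b) x⟫_ℂ = ⟪L (star a) x, L b x⟫_ℂ := by
    rw [map_star, ContinuousLinearMap.star_eq_adjoint, ContinuousLinearMap.adjoint_inner_left,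
      map_mul, mul_apply_eq_comp]
  have h₂ : ⟪x, L (b * a) x⟫_ℂ = ⟪L (star a) (L (star b) x), x⟫_ℂ := by
    rw [← mul_apply_eq_comp, ← map_mul, ← star_mul, map_star, ContinuousLinearMap.star_eq_adjoint,
      ContinuousLinearMap.adjoint_inner_left]
  have h₃ : ⟪L (star a) (R (op (star b)) x), x⟫_ℂ = ⟪L (star a) x, R (op b) x⟫_ℂ := by
    rw [← mul_apply_eq_comp, (hcomm _ _).eq, mul_apply_eq_comp, op_star, map_star,
      ContinuousLinearMap.star_eq_adjoint, ContinuousLinearMap.adjoint_inner_left]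
  rw [inner_sub_right, map_sub, inner_sub_left, h₁, h₂, h₃]
  ring

theorem IsAlmostCentral.tendsto_inner_map_mul_sub_inner_map_mul
    (hcomm : ∀ (a : A) (b : Aᵐᵒᵖ), Commute (L a) (R b)) {ι : Type*} {l : Filter ι}
    {ζ : ι → H} (hζ1 : ∀ i, ‖ζ i‖ ≤ 1) (hζ : IsAlmostCentral L R l ζ) (a b : A) :
    Tendsto (fun i => ⟪ζ i, L (a * b) (ζ i)⟫_ℂ - ⟪ζ i, L (b * a) (ζ i)⟫_ℂ) l (nhds 0) := by
  have hlim := ((hζ b).add (hζ (star b))).const_mul ‖L (star a)‖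
  rw [add_zero, mul_zero] at hlim
  refine squeeze_zero_norm (fun i => ?_) hlim
  set T := L (star a)
  have hT : ‖T (ζ i)‖ ≤ ‖T‖ := by simpa using T.le_opNorm_of_le (hζ1 i)
  rw [inner_map_mul_sub_inner_map_mul hcomm, mul_add]
  refine (norm_add_le _ _).trans (add_le_add ?_ ?_)
  · calc _ ≤ ‖T (ζ i)‖ * ‖L b (ζ i) - R (op b) (ζ i)‖ := norm_inner_le_norm _ _
      _ ≤ _ := by gcongr
  · calc _ ≤ ‖T (R (op (star b)) (ζ i) - L (star b) (ζ i))‖ * ‖ζ i‖ := norm_inner_le_norm _ _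
      _ ≤ ‖T‖ * ‖R (op (star b)) (ζ i) - L (star b) (ζ i)‖ * 1 := by
        gcongr
        · exact T.le_opNorm _
        · exact hζ1 i
      _ = _ := by rw [mul_one, norm_sub_rev]

theorem IsAlmostCentral.exists_trace (hcomm : ∀ (a : A) (b : Aᵐᵒᵖ), Commute (L a) (R b))
    {ι : Type*} {l : Filter ι} [l.NeBot] {ζ : ι → H} (hζ1 : ∀ i, ‖ζ i‖ = 1)
    (hζ : IsAlmostCentral L R l ζ) :
    ∃ τ : A →ₗ[ℂ] ℂ, τ 1 = 1 ∧ (∀ a, 0 ≤ τ (star a * a)) ∧ ∀ a b, τ (a * b) = τ (b * a) := by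
  let F : A →ₗ[ℂ] ι → ℂ :=
    { toFun a i := ⟪ζ i, L a (ζ i)⟫_ℂ
      map_add' _ _ := by ext; simp
      map_smul' _ _ := by ext; simp }
  have hF (a : A) : ∃ C, ∀ i, ‖F a i‖ ≤ C := ⟨‖L a‖, fun i => by
    simpa [F, hζ1 i] using (norm_inner_le_norm (ζ i) (L a (ζ i))).trans
      (mul_le_mul_of_nonneg_left ((L a).le_opNorm (ζ i)) (norm_nonneg _))⟩
  obtain ⟨τ, hτ⟩ := (Ultrafilter.of l).exists_linearMap_tendsto F hF
  refine ⟨τ, ?_, fun a => ?_, fun a b => ?_⟩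
  · refine tendsto_nhds_unique (hτ 1) (tendsto_const_nhds.congr fun i => ?_)
    simp [F, inner_self_eq_norm_sq_to_K, hζ1 i]
  · refine ge_of_tendsto' (hτ _) fun i => ?_
    change 0 ≤ ⟪ζ i, L (star a * a) (ζ i)⟫_ℂ
    rw [map_mul, map_star, mul_apply_eq_comp, ContinuousLinearMap.star_eq_adjoint,
      ContinuousLinearMap.adjoint_inner_right, inner_self_eq_norm_sq_to_K]
    positivity
  · refine sub_eq_zero.mp (tendsto_nhds_unique ((hτ (a * b)).sub (hτ (b * a))) ?_)
    exact (hζ.tendsto_inner_map_mul_sub_inner_map_mul hcomm (fun i => (hζ1 i).le) a b).mono_left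
      (Ultrafilter.of_le l)

end AlmostCentral

section Corner

variable {A B H : Type*} [Ring A] [StarRing A] [Algebra ℂ A] [Ring B] [StarRing B] [Algebra ℂ B]
  [NormedAddCommGroup H] [InnerProductSpace ℂ H] [CompleteSpace H]

/-- The subspace `eHe` of the bimodule `H`. -/
noncomputable def corner (L : A →⋆ₐ[ℂ] (H →L[ℂ] H)) (R : Aᵐᵒᵖ →⋆ₐ[ℂ] (H →L[ℂ] H)) (e : A) :
    Submodule ℂ H :=
  (L e).eqLocus 1 ⊓ (R (op e)).eqLocus 1

variable {L : A →⋆ₐ[ℂ] (H →L[ℂ] H)} {R : Aᵐᵒᵖ →⋆ₐ[ℂ] (H →L[ℂ] H)}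

theorem mem_corner {e : A} {x : H} : x ∈ corner L R e ↔ L e x = x ∧ R (op e) x = x := by
  simp [corner]

theorem isClosed_corner (e : A) : IsClosed (corner L R e : Set H) :=
  (ContinuousLinearMap.isClosed_eqLocus (L e) 1).inter
    (ContinuousLinearMap.isClosed_eqLocus (R (op e)) 1)

instance (e : A) : CompleteSpace (corner L R e) :=
  (isClosed_corner e).completeSpace_coe

variable (hcomm : ∀ (a : A) (b : Aᵐᵒᵖ), Commute (L a) (R b)) (φ : B →⋆ₙₐ[ℂ] A)

theorem map_one_mul_map (b : B) : φ 1 * φ b = φ b := by rw [← map_mul, one_mul]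

theorem map_mul_map_one (b : B) : φ b * φ 1 = φ b := by rw [← map_mul, mul_one]

noncomputable def cornerProj : H →L[ℂ] corner L R (φ 1) :=
  (L (φ 1) * R (op (φ 1))).codRestrict _ fun x => mem_corner.mpr
    ⟨by rw [← mul_apply_eq_comp, ← mul_assoc, ← map_mul, map_one_mul_map],
     by rw [← mul_apply_eq_comp, ← mul_assoc, ← (hcomm _ _).eq, mul_assoc, ← map_mul, ← op_mul,
       map_one_mul_map]⟩

theorem norm_cornerProj_le (x : H) : ‖cornerProj hcomm φ x‖ ≤ ‖x‖ :=
  have he := (IsStarProjection.one B).map φ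
  ((he.map L).norm_apply_le _).trans ((he.op.map R).norm_apply_le x)

noncomputable def cornerLeft : B →⋆ₐ[ℂ] (corner L R (φ 1) →L[ℂ] corner L R (φ 1)) :=
  ((L : A →⋆ₙₐ[ℂ] (H →L[ℂ] H)).comp φ).restrictUnital _
    (fun b x hx => mem_corner.mpr
      ⟨show L (φ 1) (L (φ b) x) = L (φ b) x by
        rw [← mul_apply_eq_comp, ← map_mul, map_one_mul_map],
       show R (op (φ 1)) (L (φ b) x) = L (φ b) x by
        rw [← mul_apply_eq_comp, ← (hcomm _ _).eq, mul_apply_eq_comp, (mem_corner.mp hx).2]⟩)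
    (fun _ hx => (mem_corner.mp hx).1)

noncomputable def cornerRight : Bᵐᵒᵖ →⋆ₐ[ℂ] (corner L R (φ 1) →L[ℂ] corner L R (φ 1)) :=
  ((R : Aᵐᵒᵖ →⋆ₙₐ[ℂ] (H →L[ℂ] H)).comp φ.op).restrictUnital _
    (fun b x hx => mem_corner.mpr
      ⟨show L (φ 1) (R (op (φ b.unop)) x) = R (op (φ b.unop)) x by
        rw [← mul_apply_eq_comp, (hcomm _ _).eq, mul_apply_eq_comp, (mem_corner.mp hx).1],
       show R (op (φ 1)) (R (op (φ b.unop)) x) = R (op (φ b.unop)) x by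
        rw [← mul_apply_eq_comp, ← map_mul, ← op_mul, map_mul_map_one]⟩)
    (fun _ hx => (mem_corner.mp hx).2)

theorem commute_cornerLeft_cornerRight (b : B) (b' : Bᵐᵒᵖ) :
    Commute (cornerLeft hcomm φ b) (cornerRight hcomm φ b') := by
  ext x
  exact congr($((hcomm (φ b) (op (φ b'.unop))).eq) x)

theorem cornerLeft_cornerProj (b : B) (x : H) :
    cornerLeft hcomm φ b (cornerProj hcomm φ x) = cornerProj hcomm φ (L (φ b) x) := by
  ext
  change L (φ b) (L (φ 1) (R (op (φ 1)) x)) = L (φ 1) (R (op (φ 1)) (L (φ b) x))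
  have h₁ : L (φ b) * (L (φ 1) * R (op (φ 1))) = L (φ b) * R (op (φ 1)) := by
    rw [← mul_assoc, ← map_mul, map_mul_map_one]
  have h₂ : L (φ 1) * R (op (φ 1)) * L (φ b) = L (φ b) * R (op (φ 1)) := by
    rw [mul_assoc, ← (hcomm _ _).eq, ← mul_assoc, ← map_mul, map_one_mul_map]
  exact congr($(h₁.trans h₂.symm) x)

theorem cornerRight_cornerProj (b : B) (x : H) :
    cornerRight hcomm φ (op b) (cornerProj hcomm φ x) = cornerProj hcomm φ (R (op (φ b)) x) := by
  ext
  change R (op (φ b)) (L (φ 1) (R (op (φ 1)) x)) = L (φ 1) (R (op (φ 1)) (R (op (φ b)) x))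
  have h₁ : R (op (φ b)) * (L (φ 1) * R (op (φ 1))) = L (φ 1) * R (op (φ b)) := by
    rw [← mul_assoc, ← (hcomm _ _).eq, mul_assoc, ← map_mul, ← op_mul, map_one_mul_map]
  have h₂ : L (φ 1) * R (op (φ 1)) * R (op (φ b)) = L (φ 1) * R (op (φ b)) := by
    rw [mul_assoc, ← map_mul, ← op_mul, map_mul_map_one]
  exact congr($(h₁.trans h₂.symm) x)

theorem IsAlmostCentral.cornerProj {ι : Type*} {l : Filter ι} {ξ : ι → H}
    (hξ : IsAlmostCentral L R l ξ) :
    IsAlmostCentral (cornerLeft hcomm φ) (cornerRight hcomm φ) l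
      (fun i => cornerProj hcomm φ (ξ i)) := by
  intro b
  refine squeeze_zero (fun _ => norm_nonneg _) (fun i => ?_) (hξ (φ b))
  rw [cornerLeft_cornerProj, cornerRight_cornerProj, ← map_sub]
  exact norm_cornerProj_le hcomm _ _

end Corner

section Product

variable {B C H : Type*} [Ring B] [StarRing B] [Algebra ℂ B] [Ring C] [StarRing C] [Algebra ℂ C]
  [NormedAddCommGroup H] [InnerProductSpace ℂ H] [CompleteSpace H]
  {L : B × C →⋆ₐ[ℂ] (H →L[ℂ] H)} {R : (B × C)ᵐᵒᵖ →⋆ₐ[ℂ] (H →L[ℂ] H)}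
  (hcomm : ∀ (a : B × C) (b : (B × C)ᵐᵒᵖ), Commute (L a) (R b))

open NonUnitalStarAlgHom

theorem norm_le_norm_cornerProj_inl_add (x : H) :
    ‖x‖ ≤ ‖cornerProj hcomm (inl ℂ B C) x‖ + ‖cornerProj hcomm (inr ℂ B C) x‖
      + 2 * ‖L (inl ℂ B C 1) x - R (op (inl ℂ B C 1)) x‖ := by
  have hinr : inr ℂ B C 1 = 1 - inl ℂ B C 1 := by ext <;> simp
  have hcorner : ‖cornerProj hcomm (inr ℂ B C) x‖
      = ‖(1 - L (inl ℂ B C 1)) ((1 - R (op (inl ℂ B C 1))) x)‖ := by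
    change ‖L (inr ℂ B C 1) (R (op (inr ℂ B C 1)) x)‖ = _
    rw [hinr, map_sub, map_one L, op_sub, op_one, map_sub, map_one R]
  rw [hcorner]
  exact norm_le_of_isStarProjection (((IsStarProjection.one B).map (inl ℂ B C)).op.map R)
    (hcomm _ _) x

theorem apply_eq_of_cornerLeft_eq_cornerRight (χ : corner L R (inl ℂ B C 1))
    (hχ : ∀ b, cornerLeft hcomm (inl ℂ B C) b χ = cornerRight hcomm (inl ℂ B C) (op b) χ)
    (a : B × C) : L a χ = R (op a) χ := by
  obtain ⟨hL, hR⟩ := mem_corner.mp χ.2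
  have hright : a * inl ℂ B C 1 = inl ℂ B C a.1 := by ext <;> simp
  have hleft : inl ℂ B C 1 * a = inl ℂ B C a.1 := by ext <;> simp
  calc L a χ = L (inl ℂ B C a.1) χ := by rw [← hright, map_mul, mul_apply_eq_comp, hL]
    _ = R (op (inl ℂ B C a.1)) χ := congrArg Subtype.val (hχ a.1)
    _ = R (op a) χ := by rw [← hleft, op_mul, map_mul, mul_apply_eq_comp, hR]

end Product

theorem propertyT_of_directSum_with_traceless_general
    {B : Type*} [NormedRing B] [StarRing B] [NormedAlgebra ℂ B]
    {C : Type*} [NormedRing C] [StarRing C] [NormedAlgebra ℂ C]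
    (hB : PropertyT B)
    (hC : ¬∃ τ : C →ₗ[ℂ] ℂ, τ 1 = 1 ∧ (∀ c : C, 0 ≤ τ (star c * c)) ∧
      ∀ c d : C, τ (c * d) = τ (d * c)) :
    PropertyT (B × C) := by
  intro H _ _ _ L R hcomm ⟨ξ, hξ1, hξ⟩
  replace hξ : IsAlmostCentral L R atTop ξ := hξ
  have hinr : Tendsto (fun n => ‖cornerProj hcomm (NonUnitalStarAlgHom.inr ℂ B C) (ξ n)‖)
      atTop (nhds 0) := by
    by_contra h
    obtain ⟨ζ, hζ1, hζ⟩ :=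
      (hξ.cornerProj hcomm (NonUnitalStarAlgHom.inr ℂ B C)).exists_unit_of_not_tendsto h
    exact hC (hζ.exists_trace (commute_cornerLeft_cornerRight hcomm _) hζ1)
  have hinl : ¬Tendsto (fun n => ‖cornerProj hcomm (NonUnitalStarAlgHom.inl ℂ B C) (ξ n)‖)
      atTop (nhds 0) := by
    intro h
    have hsum := (h.add hinr).add ((hξ (NonUnitalStarAlgHom.inl ℂ B C 1)).const_mul 2)
    rw [add_zero, mul_zero, add_zero] at hsum
    have := ge_of_tendsto' hsum fun n => hξ1 n ▸ norm_le_norm_cornerProj_inl_add hcomm (ξ n)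
    norm_num at this
  obtain ⟨η, hη1, hη⟩ :=
    (hξ.cornerProj hcomm (NonUnitalStarAlgHom.inl ℂ B C)).exists_unit_of_not_tendsto hinl
  obtain ⟨χ, hχ0, hχ⟩ := hB _ _ _ (commute_cornerLeft_cornerRight hcomm _) ⟨η, hη1, hη⟩
  exact ⟨χ, by simpa using hχ0, apply_eq_of_cornerLeft_eq_cornerRight hcomm χ hχ⟩

/-- If `B` is a C*-algebra with property T and `C` is any unital C*-algebra without
tracial states, then the direct sum `B ⊕ C` has property T. -/
theorem propertyT_of_directSum_with_traceless
    {B : Type*} [NormedRing B] [StarRing B] [CStarRing B] [NormedAlgebra ℂ B]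
    [CompleteSpace B]
    {C : Type*} [NormedRing C] [StarRing C] [CStarRing C] [NormedAlgebra ℂ C]
    [CompleteSpace C]
    (hB : PropertyT B)
    (hC : ¬∃ τ : C →ₗ[ℂ] ℂ, τ 1 = 1 ∧ (∀ c : C, 0 ≤ τ (star c * c)) ∧
      ∀ c d : C, τ (c * d) = τ (d * c)) :
    PropertyT (B × C) :=
  propertyT_of_directSum_with_traceless_general hB hC
end
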